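/- Let X, Y, Z be pointed topological spaces with maps X → Y ← Z. If X is n-connected, Z is n-connected, and Y is (n+1)-connected, then the homotopy pullback of X → Y ← Z is n-connected. -/

import Mathlib

/-!
A `k`-loop in the homotopy pullback is a triple `(a, c, b)`: `k`-loops `a` in `X` and `b` in `Z`,
and a `k`-cube `c` of paths from `f ∘ a` to `g ∘ b`. Since `π_k X` and `π_k Z` vanish, `a` and `b`
contract, and as the homotopy pullback is fibred over `X × Z` these contractions lift, deforming
the loop into one with `a` and `b` constant. The cube of paths is then a `(k + 1)`-loop in `Y`,
and its contraction in `Y` contracts the loop inside the fibre.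
-/

open CategoryTheory Topology unitInterval

noncomputable section

/-- The map induced by a continuous map on generalized loops. -/
def GenLoop.push {N X Y : Type*} [TopologicalSpace X] [TopologicalSpace Y] {x : X}
    (f : C(X, Y)) (p : GenLoop N X x) : GenLoop N Y (f x) :=
  ⟨f.comp p.1, fun y hy => by simp [p.2 y hy]⟩

/-- A pointed space is `n`-connected if all homotopy groups `π_k` for `0 ≤ k ≤ n`
(including `π_0`) are trivial. -/
def NConnected (n : ℕ) (X : Type*) [TopologicalSpace X] (x : X) : Prop :=
  ∀ k : ℕ, k ≤ n → Subsingleton (HomotopyGroup (Fin k) X x)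

/-- The homotopy pullback of `X → Y ← Z`: triples `(x, γ, z)` where `γ` is a path in `Y`
from the image of `x` to the image of `z`. -/
abbrev HomotopyPullback {X Y Z : Type*} [TopologicalSpace X] [TopologicalSpace Y]
    [TopologicalSpace Z] (f : C(X, Y)) (g : C(Z, Y)) : Type _ :=
  { p : X × C(unitInterval, Y) × Z // p.2.1 0 = f p.1 ∧ p.2.1 1 = g p.2.2 }

theorem subsingleton_homotopyGroup_iff {N W : Type*} [TopologicalSpace W] {w : W} :
    Subsingleton (HomotopyGroup N W w) ↔
      ∀ p : GenLoop N W w, GenLoop.Homotopic p GenLoop.const := by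
  refine ⟨fun h p => Quotient.exact (h.elim ⟦p⟧ ⟦GenLoop.const⟧), fun h => ⟨fun p q => ?_⟩⟩
  induction p, q using Quotient.inductionOn₂ with
  | h p q => exact Quotient.sound ((h p).trans (h q).symm)

theorem GenLoop.homotopic_of_continuousMap {N W : Type*} [TopologicalSpace W] {w : W}
    {p q : GenLoop N W w} (H : C(I × (I^N), W)) (h₀ : ∀ y, H (0, y) = p y)
    (h₁ : ∀ y, H (1, y) = q y) (hH : ∀ t, ∀ y ∈ Cube.boundary N, H (t, y) = w) :
    GenLoop.Homotopic p q :=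
  ⟨{ toContinuousMap := H
     map_zero_left := h₀
     map_one_left := h₁
     prop' t y hy := (hH t y hy).trans (GenLoop.boundary p y hy).symm }⟩

theorem Cube.mem_boundary_succ_iff {k : ℕ} {y : I^(Fin (k + 1))} :
    y ∈ Cube.boundary (Fin (k + 1)) ↔
      (Fin.init y : I^(Fin k)) ∈ Cube.boundary (Fin k) ∨ y (Fin.last k) = 0 ∨
        y (Fin.last k) = 1 := by
  simp only [Cube.boundary, Set.mem_ofPred_eq, Fin.exists_fin_succ']
  rfl

namespace HomotopyPullback

variable {X Y Z : Type*} [TopologicalSpace X] [TopologicalSpace Y] [TopologicalSpace Z]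
  {f : C(X, Y)} {g : C(Z, Y)}

def fst : C(HomotopyPullback f g, X) := ⟨fun p => p.1.1, by fun_prop⟩

def snd : C(HomotopyPullback f g, Z) := ⟨fun p => p.1.2.2, by fun_prop⟩

theorem ext {p q : HomotopyPullback f g} (h₁ : p.1.1 = q.1.1) (h₂ : ∀ s, p.1.2.1 s = q.1.2.1 s)
    (h₃ : p.1.2.2 = q.1.2.2) : p = q :=
  Subtype.ext (Prod.ext h₁ (Prod.ext (ContinuousMap.ext h₂) h₃))

local notation "clamp" => Set.projIcc (0 : ℝ) 1 zero_le_one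

section
variable {W : Type*} [TopologicalSpace W]

/-- At time `t` the path runs backwards along `f ∘ A(·, w)` from `t` to `0` on `[0, t/3]`,
along the path of `L w` on `[t/3, 1 - t/3]`, and along `g ∘ B(·, w)` from `0` to `t`
on `[1 - t/3, 1]`. -/
def liftPath (L : C(W, HomotopyPullback f g)) (A : C(I × W, X)) (B : C(I × W, Z))
    (q : (I × W) × I) : Y :=
  if 3 * (q.2 : ℝ) ≤ q.1.1 then f (A (clamp (q.1.1 - 3 * q.2), q.1.2))
  else if 3 - (q.1.1 : ℝ) ≤ 3 * q.2 then g (B (clamp (3 * q.2 - 3 + q.1.1), q.1.2))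
  else (L q.1.2).1.2.1 (clamp ((3 * q.2 - q.1.1) / (3 - 2 * q.1.1)))

variable {L : C(W, HomotopyPullback f g)} {A : C(I × W, X)} {B : C(I × W, Z)}

theorem continuous_liftPath (hA : ∀ w, A (0, w) = (L w).1.1) (hB : ∀ w, B (0, w) = (L w).1.2.2) :
    Continuous (liftPath L A B) := by
  have hden : ∀ q : (I × W) × I, (3 : ℝ) - 2 * q.1.1 ≠ 0 := fun q => by linarith [q.1.1.2.2]
  have hpath : Continuous fun w => (L w).1.2.1 := by fun_prop
  have harg : Continuous fun q : (I × W) × I => (3 * (q.2 : ℝ) - q.1.1) / (3 - 2 * q.1.1) := by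
    fun_prop (disch := exact hden)
  have hmid : Continuous fun q : (I × W) × I =>
      (L q.1.2).1.2.1 (clamp ((3 * q.2 - q.1.1) / (3 - 2 * q.1.1))) :=
    continuous_eval.comp ((hpath.comp (continuous_snd.comp continuous_fst)).prodMk
      ((continuous_projIcc (h := zero_le_one)).comp harg))
  refine Continuous.if_le (by fun_prop)
    (Continuous.if_le (by fun_prop) hmid (by fun_prop) (by fun_prop) ?_) (by fun_prop)
    (by fun_prop) ?_
  · rintro ⟨⟨t, w⟩, s⟩ (h : (3 : ℝ) - t = 3 * s)
    have hB0 : clamp (3 * (s : ℝ) - 3 + t) = 0 := projIcc_eq_zero.2 (by linarith)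
    have hmid1 : clamp ((3 * (s : ℝ) - t) / (3 - 2 * t)) = 1 :=
      projIcc_eq_one.2 ((one_le_div₀ (by linarith [t.2.2])).2 (by linarith))
    simp only [hB0, hmid1, hB]
    exact (L w).2.2.symm
  · rintro ⟨⟨t, w⟩, s⟩ (h : 3 * (s : ℝ) = t)
    have hA0 : clamp ((t : ℝ) - 3 * s) = 0 := projIcc_eq_zero.2 (by linarith)
    have hmid0 : clamp ((3 * (s : ℝ) - t) / (3 - 2 * t)) = 0 :=
      projIcc_eq_zero.2 (by rw [h, sub_self, zero_div])
    simp only [hA0, hmid0, hA, if_neg (show ¬ (3 : ℝ) - t ≤ 3 * s by linarith [t.2.2, s.2.2])]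
    exact (L w).2.1.symm

theorem liftPath_source (t : I) (w : W) : liftPath L A B ((t, w), 0) = f (A (t, w)) := by
  rw [liftPath, if_pos (by simp [t.2.1])]
  simp [Set.projIcc_val]

theorem liftPath_target (t : I) (w : W) : liftPath L A B ((t, w), 1) = g (B (t, w)) := by
  rw [liftPath, if_neg (by simp; linarith [t.2.2]), if_pos (by simp [t.2.1])]
  norm_num [Set.projIcc_val]

theorem liftPath_time_zero (hA : ∀ w, A (0, w) = (L w).1.1) (hB : ∀ w, B (0, w) = (L w).1.2.2)
    (w : W) (s : I) : liftPath L A B ((0, w), s) = (L w).1.2.1 s := by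
  have hs := s.2
  simp only [liftPath, Set.Icc.coe_zero, sub_zero, mul_zero, add_zero]
  split_ifs with h0 h1
  · obtain rfl : s = 0 := Subtype.ext (by simp only [Set.Icc.coe_zero]; linarith [hs.1])
    simp [hA, (L w).2.1]
  · obtain rfl : s = 1 := Subtype.ext (by simp only [Set.Icc.coe_one]; linarith [hs.2])
    simp [hB, (L w).2.2]
  · simp [Set.projIcc_val]

theorem liftPath_of_stationary {w : W} (hA : ∀ t, A (t, w) = (L w).1.1)
    (hB : ∀ t, B (t, w) = (L w).1.2.2) (hL : ∀ s, (L w).1.2.1 s = f (L w).1.1) (t s : I) :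
    liftPath L A B ((t, w), s) = (L w).1.2.1 s := by
  rw [hL, liftPath]
  split_ifs
  · rw [hA]
  · rw [hB, ← (L w).2.2, hL]
  · exact hL _

/-- The homotopy lifting property of `HomotopyPullback f g → X × Z`. -/
def liftHomotopy (L : C(W, HomotopyPullback f g)) (A : C(I × W, X)) (B : C(I × W, Z))
    (hA : ∀ w, A (0, w) = (L w).1.1) (hB : ∀ w, B (0, w) = (L w).1.2.2) :
    C(I × W, HomotopyPullback f g) :=
  let Γ : C(I × W, C(I, Y)) := ContinuousMap.curry ⟨liftPath L A B, continuous_liftPath hA hB⟩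
  ⟨fun q => ⟨(A q, Γ q, B q), liftPath_source q.1 q.2, liftPath_target q.1 q.2⟩, by fun_prop⟩

variable (hA : ∀ w, A (0, w) = (L w).1.1) (hB : ∀ w, B (0, w) = (L w).1.2.2)

theorem liftHomotopy_zero (w : W) : liftHomotopy L A B hA hB (0, w) = L w :=
  ext (hA w) (liftPath_time_zero hA hB w) (hB w)

theorem liftHomotopy_of_stationary {w : W} (hAw : ∀ t, A (t, w) = (L w).1.1)
    (hBw : ∀ t, B (t, w) = (L w).1.2.2) (hLw : ∀ s, (L w).1.2.1 s = f (L w).1.1) (t : I) :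
    liftHomotopy L A B hA hB (t, w) = L w :=
  ext (hAw t) (liftPath_of_stationary hAw hBw hLw t) (hBw t)

end

variable {k : ℕ} {p₀ : HomotopyPullback f g}

/-- A `k`-loop in the fibre over `(p₀.1.1, p₀.1.2.2)` is a `(k + 1)`-loop of `Y`. -/
theorem genLoop_homotopic_const_of_mem_fiber (hp₀ : ∀ s, p₀.1.2.1 s = f p₀.1.1)
    (hY : Subsingleton (HomotopyGroup (Fin (k + 1)) Y (f p₀.1.1)))
    (L : GenLoop (Fin k) (HomotopyPullback f g) p₀) (hLX : ∀ u, (L u).1.1 = p₀.1.1)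
    (hLZ : ∀ u, (L u).1.2.2 = p₀.1.2.2) :
    GenLoop.Homotopic L GenLoop.const := by
  have hL₀ : ∀ u, (L u).1.2.1 0 = f p₀.1.1 := fun u => by rw [(L u).2.1, hLX]
  have hL₁ : ∀ u, (L u).1.2.1 1 = f p₀.1.1 := fun u => by rw [(L u).2.2, hLZ, ← p₀.2.2, hp₀]
  have hLbd : ∀ u ∈ Cube.boundary (Fin k), ∀ s, (L u).1.2.1 s = f p₀.1.1 := fun u hu s => by
    rw [GenLoop.boundary L u hu, hp₀]
  let D : GenLoop (Fin (k + 1)) Y (f p₀.1.1) :=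
    ⟨⟨fun y => (L (Fin.init y)).1.2.1 (y (Fin.last k)), by fun_prop⟩, fun y hy => by
      rcases Cube.mem_boundary_succ_iff.1 hy with hy | hy | hy
      · exact hLbd _ hy _
      · exact (congrArg _ hy).trans (hL₀ _)
      · exact (congrArg _ hy).trans (hL₁ _)⟩
  obtain ⟨G⟩ := subsingleton_homotopyGroup_iff.1 hY D
  have hG : ∀ t, ∀ y ∈ Cube.boundary (Fin (k + 1)), G (t, y) = f p₀.1.1 := fun t y hy =>
    (G.eq_fst t hy).trans (GenLoop.boundary D y hy)
  have hsnoc : ∀ u s, s = 0 ∨ s = 1 ∨ u ∈ Cube.boundary (Fin k) →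
      (Fin.snoc u s : I^(Fin (k + 1))) ∈ Cube.boundary (Fin (k + 1)) := fun u s hs =>
    Cube.mem_boundary_succ_iff.2 (by simp only [Fin.init_snoc, Fin.snoc_last]; tauto)
  let Γ : C(I × (I^(Fin k)), C(I, Y)) :=
    ContinuousMap.curry ⟨fun q => G (q.1.1, Fin.snoc q.1.2 q.2), by fun_prop⟩
  let H : C(I × (I^(Fin k)), HomotopyPullback f g) :=
    ⟨fun q => ⟨(p₀.1.1, Γ q, p₀.1.2.2), hG _ _ (hsnoc _ _ (.inl rfl)),
      (hG _ _ (hsnoc _ _ (.inr (.inl rfl)))).trans ((hp₀ 1).symm.trans p₀.2.2)⟩, by fun_prop⟩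
  refine GenLoop.homotopic_of_continuousMap H (fun u => ?_) (fun u => ?_) (fun t u hu => ?_)
  · refine ext (hLX u).symm (fun s => ?_) (hLZ u).symm
    show G (0, Fin.snoc u s) = _
    rw [G.apply_zero]
    show (L (Fin.init (Fin.snoc u s : I^(Fin (k + 1))))).1.2.1
      ((Fin.snoc u s : I^(Fin (k + 1))) (Fin.last k)) = _
    rw [Fin.init_snoc, Fin.snoc_last]
  · exact ext rfl (fun s => (G.apply_one _).trans (hp₀ s).symm) rfl
  · exact ext rfl (fun s => (hG t _ (hsnoc u s (.inr (.inr hu)))).trans (hp₀ s).symm) rfl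

theorem genLoop_homotopic_const (hp₀ : ∀ s, p₀.1.2.1 s = f p₀.1.1)
    (hX : Subsingleton (HomotopyGroup (Fin k) X p₀.1.1))
    (hZ : Subsingleton (HomotopyGroup (Fin k) Z p₀.1.2.2))
    (hY : Subsingleton (HomotopyGroup (Fin (k + 1)) Y (f p₀.1.1)))
    (L : GenLoop (Fin k) (HomotopyPullback f g) p₀) :
    GenLoop.Homotopic L GenLoop.const := by
  obtain ⟨A⟩ := subsingleton_homotopyGroup_iff.1 hX (GenLoop.push fst L)
  obtain ⟨B⟩ := subsingleton_homotopyGroup_iff.1 hZ (GenLoop.push snd L)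
  let H := liftHomotopy L.1 A.toContinuousMap B.toContinuousMap A.apply_zero B.apply_zero
  have hH : ∀ t, ∀ u ∈ Cube.boundary (Fin k), H (t, u) = p₀ := fun t u hu => by
    have hLu : L.1 u = p₀ := GenLoop.boundary L u hu
    exact (liftHomotopy_of_stationary _ _ (fun t => A.eq_fst t hu) (fun t => B.eq_fst t hu)
      (fun s => by rw [hLu]; exact hp₀ s) t).trans hLu
  let L₁ : GenLoop (Fin k) (HomotopyPullback f g) p₀ := ⟨H.curry 1, hH 1⟩
  exact (GenLoop.homotopic_of_continuousMap H (liftHomotopy_zero _ _) (fun _ => rfl) hH).trans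
    (genLoop_homotopic_const_of_mem_fiber hp₀ hY L₁ A.apply_one B.apply_one)

end HomotopyPullback

/-- If `X` and `Z` are `n`-connected and `Y` is `(n+1)`-connected, the homotopy pullback of
`X → Y ← Z` is `n`-connected. -/
theorem homotopyPullback_connectivity {X Y Z : Type*} [TopologicalSpace X] [TopologicalSpace Y]
    [TopologicalSpace Z] (f : C(X, Y)) (g : C(Z, Y)) (x₀ : X) (z₀ : Z)
    (hbase : f x₀ = g z₀) (n : ℕ)
    (hX : NConnected n X x₀) (hZ : NConnected n Z z₀)
    (hY : NConnected (n + 1) Y (f x₀)) :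
    NConnected n (HomotopyPullback f g)
      ⟨(x₀, ContinuousMap.const _ (f x₀), z₀), rfl, by simpa using hbase⟩ := fun k hk =>
  subsingleton_homotopyGroup_iff.2 <| HomotopyPullback.genLoop_homotopic_const (fun _ => rfl)
    (hX k hk) (hZ k hk) (hY (k + 1) (by omega))
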